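/- arXiv:0706.3282 — 2 statements merged into one kernel-verified Lean document; each statement's English description precedes it below -/
import Mathlib

section
/- Let (A, H, φ, ψ) be a matched pair of Lie coalgebras. Then the vector space A ⊕ H equipped with the cobracket δ_D defined by δ_D(a) = δ_A(a) + φ(a) − τφ(a) for a ∈ A and δ_D(h) = δ_H(h) + ψ(h) − τψ(h) for h ∈ H (all terms viewed inside (A ⊕ H) ⊗ (A ⊕ H)) is a Lie coalgebra, i.e. δ_D satisfies coanticommutativity τ∘δ_D = −δ_D and the co-Jacobi identity (id + ξ + ξ²)∘(δ_D ⊗ id)∘δ_D = 0. -/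
/-!
Write `D = A × H`. Coanticommutativity of `δ_D` is inherited from `δ_A` and `δ_H`, since the
mixed terms `φ − τφ` and `ψ − τψ` are antisymmetric by construction.

For co-Jacobi, the cyclic sum `J = (id + ξ + ξ²)(δ_D ⊗ id)δ_D` is `ξ`-invariant, so its eight
components in `D ⊗ D ⊗ D` (choose `A` or `H` in each slot) are determined by one representative
of each cyclic orbit: `AAA`, `HAA`, `HHA`, `HHH`. The projections `D → A` and `D → H` are
coalgebra maps, so the `AAA` and `HHH` components are the co-Jacobiators of `A` and `H`. Expanding
`δ_D` in Sweedler notation, the `HAA` component of `J(a, h)` is (BB3) for `a` plus the comodule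
axiom of `H` for `h`, and the `HHA` component is the comodule axiom of `A` for `a` plus (BB4)
for `h`.
-/

open TensorProduct

noncomputable section

variable {k : Type*} [Field k]
variable {A H : Type*} [AddCommGroup A] [Module k A] [AddCommGroup H] [Module k H]

/-- The cyclic rotation `ξ : u ⊗ v ⊗ w ↦ v ⊗ w ⊗ u` on `(L ⊗ L) ⊗ L`. -/
def ξmap (k L : Type*) [Field k] [AddCommGroup L] [Module k L] :
    ((L ⊗[k] L) ⊗[k] L) →ₗ[k] ((L ⊗[k] L) ⊗[k] L) :=
  (TensorProduct.comm k L (L ⊗[k] L)).toLinearMap ∘ₗ (TensorProduct.assoc k L L L).toLinearMap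

/-- Swap the last two tensor factors: `(m ⊗ n) ⊗ p ↦ (m ⊗ p) ⊗ n`. -/
def swapR (k M N P : Type*) [Field k] [AddCommGroup M] [Module k M] [AddCommGroup N]
    [Module k N] [AddCommGroup P] [Module k P] :
    ((M ⊗[k] N) ⊗[k] P) →ₗ[k] ((M ⊗[k] P) ⊗[k] N) :=
  (TensorProduct.assoc k M P N).symm.toLinearMap
    ∘ₗ TensorProduct.map LinearMap.id (TensorProduct.comm k N P).toLinearMap
    ∘ₗ (TensorProduct.assoc k M N P).toLinearMap

/-- A bilinear bracket is a Lie algebra structure: antisymmetry and the Jacobi identity. -/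
def IsLieAlg {L : Type*} [AddCommGroup L] [Module k L] (br : L →ₗ[k] L →ₗ[k] L) : Prop :=
  (∀ x y, br x y = - br y x) ∧
  (∀ x y z, br (br x y) z + br (br y z) x + br (br z x) y = 0)

/-- A cobracket is a Lie coalgebra structure: coanticommutativity `τ ∘ δ = −δ` and the
co-Jacobi identity `(id + ξ + ξ²) ∘ (δ ⊗ id) ∘ δ = 0`. -/
def IsLieCoalg {L : Type*} [AddCommGroup L] [Module k L] (δ : L →ₗ[k] L ⊗[k] L) : Prop :=
  (∀ x, TensorProduct.comm k L L (δ x) = - δ x) ∧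
  (∀ x, TensorProduct.map δ LinearMap.id (δ x)
      + ξmap k L (TensorProduct.map δ LinearMap.id (δ x))
      + ξmap k L (ξmap k L (TensorProduct.map δ LinearMap.id (δ x))) = 0)

/-- A Lie bialgebra: simultaneously a Lie algebra and a Lie coalgebra satisfying (LB):
`δ[x,y] = [x,y₁]⊗y₂ + y₁⊗[x,y₂] + x₁⊗[x₂,y] + [x₁,y]⊗x₂` (Sweedler notation). -/
def IsLieBialg {L : Type*} [AddCommGroup L] [Module k L]
    (br : L →ₗ[k] L →ₗ[k] L) (δ : L →ₗ[k] L ⊗[k] L) : Prop :=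
  IsLieAlg br ∧ IsLieCoalg δ ∧
  ∀ x y, δ (br x y)
      = TensorProduct.map (br x) LinearMap.id (δ y)
      + TensorProduct.map LinearMap.id (br x) (δ y)
      + TensorProduct.map LinearMap.id (br.flip y) (δ x)
      + TensorProduct.map (br.flip y) LinearMap.id (δ x)

/-- The bracket on the direct sum `A ⊕ H`:
`[(a,h),(b,g)] = ([a,b] + h▷b − g▷a + σ(h,g), [h,g] + h◁b − g◁a + θ(a,b))`. -/
def bbBracket (brA : A →ₗ[k] A →ₗ[k] A) (brH : H →ₗ[k] H →ₗ[k] H)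
    (r : H →ₗ[k] A →ₗ[k] A) (l : H →ₗ[k] A →ₗ[k] H)
    (σ : H →ₗ[k] H →ₗ[k] A) (θ : A →ₗ[k] A →ₗ[k] H) :
    (A × H) →ₗ[k] (A × H) →ₗ[k] (A × H) :=
  LinearMap.mk₂ k
    (fun x y => (brA x.1 y.1 + r x.2 y.1 - r y.2 x.1 + σ x.2 y.2,
                 brH x.2 y.2 + l x.2 y.1 - l y.2 x.1 + θ x.1 y.1))
    (fun x x' y => by
      simp only [Prod.fst_add, Prod.snd_add, map_add, LinearMap.add_apply, Prod.mk_add_mk,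
        Prod.mk.injEq]
      all_goals try (constructor <;> abel))
    (fun c x y => by
      simp only [Prod.smul_fst, Prod.smul_snd, map_smul, LinearMap.smul_apply, Prod.smul_mk,
        Prod.mk.injEq, smul_add, smul_sub]
      all_goals try (constructor <;> abel))
    (fun x y y' => by
      simp only [Prod.fst_add, Prod.snd_add, map_add, LinearMap.add_apply, Prod.mk_add_mk,
        Prod.mk.injEq]
      all_goals try (constructor <;> abel))
    (fun c x y => by
      simp only [Prod.smul_fst, Prod.smul_snd, map_smul, LinearMap.smul_apply, Prod.smul_mk,
        Prod.mk.injEq, smul_add, smul_sub]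
      all_goals try (constructor <;> abel))

/-- The cobracket on the direct sum `A ⊕ H`:
`δ_D(a) = δ_A(a) + φ(a) − τφ(a) + P(a)` and `δ_D(h) = δ_H(h) + ψ(h) − τψ(h) + Q(h)`,
all terms viewed inside `(A ⊕ H) ⊗ (A ⊕ H)`. -/
def bbCobracket (δA : A →ₗ[k] A ⊗[k] A) (δH : H →ₗ[k] H ⊗[k] H)
    (φ : A →ₗ[k] H ⊗[k] A) (ψ : H →ₗ[k] H ⊗[k] A)
    (P : A →ₗ[k] H ⊗[k] H) (Q : H →ₗ[k] A ⊗[k] A) :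
    (A × H) →ₗ[k] (A × H) ⊗[k] (A × H) :=
  (TensorProduct.map (LinearMap.inl k A H) (LinearMap.inl k A H) ∘ₗ δA
    + TensorProduct.map (LinearMap.inr k A H) (LinearMap.inl k A H) ∘ₗ φ
    - TensorProduct.map (LinearMap.inl k A H) (LinearMap.inr k A H)
        ∘ₗ (TensorProduct.comm k H A).toLinearMap ∘ₗ φ
    + TensorProduct.map (LinearMap.inr k A H) (LinearMap.inr k A H) ∘ₗ P) ∘ₗ LinearMap.fst k A H
  + (TensorProduct.map (LinearMap.inr k A H) (LinearMap.inr k A H) ∘ₗ δH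
    + TensorProduct.map (LinearMap.inr k A H) (LinearMap.inl k A H) ∘ₗ ψ
    - TensorProduct.map (LinearMap.inl k A H) (LinearMap.inr k A H)
        ∘ₗ (TensorProduct.comm k H A).toLinearMap ∘ₗ ψ
    + TensorProduct.map (LinearMap.inl k A H) (LinearMap.inl k A H) ∘ₗ Q) ∘ₗ LinearMap.snd k A H

namespace TensorProduct

variable {M N P Q R : Type*} [AddCommGroup M] [Module k M] [AddCommGroup N] [Module k N]
  [AddCommGroup P] [Module k P] [AddCommGroup Q] [Module k Q] [AddCommGroup R] [Module k R]

theorem map_neg_left (f : M →ₗ[k] P) (g : N →ₗ[k] Q) : map (-f) g = -map f g :=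
  ext' fun _ _ => by simp [neg_tmul]

theorem map_comp_left_apply (f : P →ₗ[k] Q) (p : M →ₗ[k] P) (r : N →ₗ[k] R) (y : M ⊗[k] N) :
    map (f ∘ₗ p) r y = map f LinearMap.id (map p r y) := by
  rw [map_map, LinearMap.id_comp]

end TensorProduct

open TensorProduct

section Rotation

variable {M N P : Type*} [AddCommGroup M] [Module k M] [AddCommGroup N] [Module k N]
  [AddCommGroup P] [Module k P]

def tensorRotate (k M N P : Type*) [Field k] [AddCommGroup M] [Module k M] [AddCommGroup N]
    [Module k N] [AddCommGroup P] [Module k P] :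
    ((M ⊗[k] N) ⊗[k] P) →ₗ[k] ((N ⊗[k] P) ⊗[k] M) :=
  (TensorProduct.comm k M (N ⊗[k] P)).toLinearMap ∘ₗ (TensorProduct.assoc k M N P).toLinearMap

theorem ξmap_eq_tensorRotate (L : Type*) [AddCommGroup L] [Module k L] :
    ξmap k L = tensorRotate k L L L := rfl

theorem tensorRotate_tensorRotate_tensorRotate (t : (M ⊗[k] N) ⊗[k] P) :
    tensorRotate k P M N (tensorRotate k N P M (tensorRotate k M N P t)) = t := by
  have : tensorRotate k P M N ∘ₗ tensorRotate k N P M ∘ₗ tensorRotate k M N P = LinearMap.id :=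
    ext_threefold fun _ _ _ => rfl
  exact LinearMap.congr_fun this t

theorem map_map_tensorRotate {M' N' P' : Type*} [AddCommGroup M'] [Module k M']
    [AddCommGroup N'] [Module k N'] [AddCommGroup P'] [Module k P']
    (f : M →ₗ[k] M') (g : N →ₗ[k] N') (e : P →ₗ[k] P') (t : (M ⊗[k] N) ⊗[k] P) :
    map (map g e) f (tensorRotate k M N P t) = tensorRotate k M' N' P' (map (map f g) e t) := by
  have : map (map g e) f ∘ₗ tensorRotate k M N P = tensorRotate k M' N' P' ∘ₗ map (map f g) e :=
    ext_threefold fun _ _ _ => rfl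
  exact LinearMap.congr_fun this t

theorem tensorRotate_map_comm (w : (M ⊗[k] N) ⊗[k] P) :
    tensorRotate k N M P (map (TensorProduct.comm k M N).toLinearMap LinearMap.id w)
      = swapR k M N P w := by
  have : tensorRotate k N M P ∘ₗ map (TensorProduct.comm k M N).toLinearMap LinearMap.id
      = swapR k M N P := ext_threefold fun _ _ _ => rfl
  exact LinearMap.congr_fun this w

theorem tensorRotate_tensorRotate_comm (v : N ⊗[k] (M ⊗[k] P)) :
    tensorRotate k P N M (tensorRotate k M P N (TensorProduct.comm k N (M ⊗[k] P) v))
      = (TensorProduct.assoc k N M P).symm v := by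
  have : tensorRotate k P N M ∘ₗ tensorRotate k M P N
        ∘ₗ (TensorProduct.comm k N (M ⊗[k] P)).toLinearMap
      = (TensorProduct.assoc k N M P).symm.toLinearMap := ext_threefold' fun _ _ _ => rfl
  exact LinearMap.congr_fun this v

theorem swapR_comm (v : P ⊗[k] (M ⊗[k] N)) :
    swapR k M N P (TensorProduct.comm k P (M ⊗[k] N) v)
      = map (TensorProduct.comm k P M).toLinearMap LinearMap.id
          ((TensorProduct.assoc k P M N).symm v) := by
  have : swapR k M N P ∘ₗ (TensorProduct.comm k P (M ⊗[k] N)).toLinearMap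
      = map (TensorProduct.comm k P M).toLinearMap LinearMap.id
          ∘ₗ (TensorProduct.assoc k P M N).symm.toLinearMap :=
    ext_threefold' fun _ _ _ => rfl
  exact LinearMap.congr_fun this v

end Rotation

section CoJacobiator

variable {L L' : Type*} [AddCommGroup L] [Module k L] [AddCommGroup L'] [Module k L']

def coJacobiator (δ : L →ₗ[k] L ⊗[k] L) : L →ₗ[k] (L ⊗[k] L) ⊗[k] L :=
  (LinearMap.id + ξmap k L + ξmap k L ∘ₗ ξmap k L) ∘ₗ map δ LinearMap.id ∘ₗ δ

theorem isLieCoalg_iff (δ : L →ₗ[k] L ⊗[k] L) :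
    IsLieCoalg δ ↔ (∀ x, TensorProduct.comm k L L (δ x) = -δ x) ∧ coJacobiator δ = 0 := by
  simp [IsLieCoalg, coJacobiator, LinearMap.ext_iff]

theorem ξmap_coJacobiator (δ : L →ₗ[k] L ⊗[k] L) (x : L) :
    ξmap k L (coJacobiator δ x) = coJacobiator δ x := by
  simp only [coJacobiator, LinearMap.comp_apply, LinearMap.add_apply, LinearMap.id_apply, map_add,
    ξmap_eq_tensorRotate, tensorRotate_tensorRotate_tensorRotate]
  abel

theorem map_map_coJacobiator {X Y Z : Type*} [AddCommGroup X] [Module k X] [AddCommGroup Y]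
    [Module k Y] [AddCommGroup Z] [Module k Z]
    (δ : L →ₗ[k] L ⊗[k] L) (f : L →ₗ[k] X) (g : L →ₗ[k] Y) (e : L →ₗ[k] Z) (x : L) :
    map (map f g) e (coJacobiator δ x)
      = map (map f g) e (map δ LinearMap.id (δ x))
        + tensorRotate k Z X Y (map (map e f) g (map δ LinearMap.id (δ x)))
        + tensorRotate k Z X Y
            (tensorRotate k Y Z X (map (map g e) f (map δ LinearMap.id (δ x)))) := by
  simp only [coJacobiator, LinearMap.comp_apply, LinearMap.add_apply, LinearMap.id_apply, map_add,
    ξmap_eq_tensorRotate, map_map_tensorRotate]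

theorem map_map_coJacobiator_of_comp_eq {δ : L →ₗ[k] L ⊗[k] L} {δ' : L' →ₗ[k] L' ⊗[k] L'}
    (f : L →ₗ[k] L') (hf : map f f ∘ₗ δ = δ' ∘ₗ f) (x : L) :
    map (map f f) f (coJacobiator δ x) = coJacobiator δ' (f x) := by
  have hsq : map (map f f) f (map δ LinearMap.id (δ x)) = map δ' LinearMap.id (δ' (f x)) :=
    calc map (map f f) f (map δ LinearMap.id (δ x))
        = map (map f f ∘ₗ δ) (f ∘ₗ LinearMap.id) (δ x) := map_map ..
      _ = map (δ' ∘ₗ f) (LinearMap.id ∘ₗ f) (δ x) := by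
        rw [hf, LinearMap.comp_id, LinearMap.id_comp]
      _ = map δ' LinearMap.id (map f f (δ x)) := (map_map ..).symm
      _ = map δ' LinearMap.id (δ' (f x)) := by rw [← LinearMap.comp_apply (map f f), hf]; rfl
  rw [map_map_coJacobiator, hsq]
  simp [coJacobiator, ξmap_eq_tensorRotate]

end CoJacobiator

section DoubleCross

variable (δA : A →ₗ[k] A ⊗[k] A) (δH : H →ₗ[k] H ⊗[k] H)
  (φ : A →ₗ[k] H ⊗[k] A) (ψ : H →ₗ[k] H ⊗[k] A)

local notation "D" => bbCobracket δA δH φ ψ (0 : A →ₗ[k] H ⊗[k] H) (0 : H →ₗ[k] A ⊗[k] A)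
local notation "ι" => LinearMap.inl k A H
local notation "κ" => LinearMap.inr k A H
local notation "pA" => LinearMap.fst k A H
local notation "pH" => LinearMap.snd k A H
local notation "τ" => (TensorProduct.comm k H A : H ⊗[k] A →ₗ[k] A ⊗[k] H)

theorem map_fst_fst_bbCobracket (x : A × H) : map pA pA (D x) = δA x.1 := by
  simp [bbCobracket, map_map]

theorem map_snd_fst_bbCobracket (x : A × H) : map pH pA (D x) = φ x.1 + ψ x.2 := by
  simp [bbCobracket, map_map]

theorem map_fst_snd_bbCobracket (x : A × H) :
    map pA pH (D x) = -TensorProduct.comm k H A (φ x.1 + ψ x.2) := by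
  simp [bbCobracket, map_map, add_comm]

theorem map_snd_snd_bbCobracket (x : A × H) : map pH pH (D x) = δH x.2 := by
  simp [bbCobracket, map_map]

theorem map_fst_fst_comp_bbCobracket : map pA pA ∘ₗ D = δA ∘ₗ pA :=
  LinearMap.ext (map_fst_fst_bbCobracket δA δH φ ψ)

theorem map_snd_fst_comp_bbCobracket : map pH pA ∘ₗ D = φ ∘ₗ pA + ψ ∘ₗ pH :=
  LinearMap.ext (map_snd_fst_bbCobracket δA δH φ ψ)

theorem map_fst_snd_comp_bbCobracket : map pA pH ∘ₗ D = -((τ ∘ₗ φ) ∘ₗ pA + (τ ∘ₗ ψ) ∘ₗ pH) :=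
  LinearMap.ext fun x => by simp [map_fst_snd_bbCobracket]

theorem map_snd_snd_comp_bbCobracket : map pH pH ∘ₗ D = δH ∘ₗ pH :=
  LinearMap.ext (map_snd_snd_bbCobracket δA δH φ ψ)

theorem map_snd_fst_fst_map_bbCobracket (x : A × H) :
    map (map pH pA) pA (map D LinearMap.id (D x))
      = map φ LinearMap.id (δA x.1) + map ψ LinearMap.id (φ x.1 + ψ x.2) := by
  rw [map_map, LinearMap.comp_id, map_snd_fst_comp_bbCobracket]
  simp only [map_add_left, LinearMap.add_apply, map_comp_left_apply, map_fst_fst_bbCobracket,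
    map_snd_fst_bbCobracket]

theorem map_fst_snd_fst_map_bbCobracket (x : A × H) :
    map (map pA pH) pA (map D LinearMap.id (D x))
      = -(map τ LinearMap.id (map φ LinearMap.id (δA x.1))
          + map τ LinearMap.id (map ψ LinearMap.id (φ x.1 + ψ x.2))) := by
  rw [map_map, LinearMap.comp_id, map_fst_snd_comp_bbCobracket]
  simp only [map_add_left, map_neg_left, LinearMap.add_apply, LinearMap.neg_apply,
    map_comp_left_apply, map_fst_fst_bbCobracket, map_snd_fst_bbCobracket]

theorem map_fst_fst_snd_map_bbCobracket (x : A × H) :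
    map (map pA pA) pH (map D LinearMap.id (D x))
      = -map δA LinearMap.id (TensorProduct.comm k H A (φ x.1 + ψ x.2)) := by
  rw [map_map, LinearMap.comp_id, map_fst_fst_comp_bbCobracket, map_comp_left_apply,
    map_fst_snd_bbCobracket, map_neg]

theorem map_snd_snd_fst_map_bbCobracket (x : A × H) :
    map (map pH pH) pA (map D LinearMap.id (D x)) = map δH LinearMap.id (φ x.1 + ψ x.2) := by
  rw [map_map, LinearMap.comp_id, map_snd_snd_comp_bbCobracket, map_comp_left_apply,
    map_snd_fst_bbCobracket]

theorem map_fst_snd_snd_map_bbCobracket (x : A × H) :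
    map (map pA pH) pH (map D LinearMap.id (D x))
      = map τ LinearMap.id (map φ LinearMap.id (TensorProduct.comm k H A (φ x.1 + ψ x.2)))
        - map τ LinearMap.id (map ψ LinearMap.id (δH x.2)) := by
  rw [map_map, LinearMap.comp_id, map_fst_snd_comp_bbCobracket]
  simp only [map_add_left, map_neg_left, LinearMap.add_apply, LinearMap.neg_apply,
    map_comp_left_apply, map_fst_snd_bbCobracket, map_snd_snd_bbCobracket, map_neg]
  abel

theorem map_snd_fst_snd_map_bbCobracket (x : A × H) :
    map (map pH pA) pH (map D LinearMap.id (D x))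
      = -map φ LinearMap.id (TensorProduct.comm k H A (φ x.1 + ψ x.2))
        + map ψ LinearMap.id (δH x.2) := by
  rw [map_map, LinearMap.comp_id, map_snd_fst_comp_bbCobracket]
  simp only [map_add_left, LinearMap.add_apply, map_comp_left_apply, map_fst_snd_bbCobracket,
    map_snd_snd_bbCobracket, map_neg]

theorem eq_zero_of_components (t : ((A × H) ⊗[k] (A × H)) ⊗[k] (A × H))
    (hAAA : map (map pA pA) pA t = 0) (hHAA : map (map pH pA) pA t = 0)
    (hAHA : map (map pA pH) pA t = 0) (hHHA : map (map pH pH) pA t = 0)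
    (hAAH : map (map pA pA) pH t = 0) (hHAH : map (map pH pA) pH t = 0)
    (hAHH : map (map pA pH) pH t = 0) (hHHH : map (map pH pH) pH t = 0) : t = 0 := by
  have hid : ι ∘ₗ pA + κ ∘ₗ pH = LinearMap.id := by
    ext x <;> simp
  calc t = map (map LinearMap.id LinearMap.id) LinearMap.id t := by simp
    _ = 0 := by
      simp only [← hid, map_add_left, map_add_right, map_comp, LinearMap.add_apply,
        LinearMap.comp_apply, hAAA, hHAA, hAHA, hHHA, hAAH, hHAH, hAHH, hHHH, map_zero, add_zero]

theorem eq_zero_of_ξmap_eq_self (t : ((A × H) ⊗[k] (A × H)) ⊗[k] (A × H))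
    (hξ : ξmap k _ t = t)
    (hAAA : map (map pA pA) pA t = 0) (hHAA : map (map pH pA) pA t = 0)
    (hHHA : map (map pH pH) pA t = 0) (hHHH : map (map pH pH) pH t = 0) : t = 0 := by
  have hAAH : map (map pA pA) pH t = 0 := by
    rw [← hξ, ξmap_eq_tensorRotate, map_map_tensorRotate, hHAA, map_zero]
  have hAHA : map (map pA pH) pA t = 0 := by
    rw [← hξ, ξmap_eq_tensorRotate, map_map_tensorRotate, hAAH, map_zero]
  have hHAH : map (map pH pA) pH t = 0 := by
    rw [← hξ, ξmap_eq_tensorRotate, map_map_tensorRotate, hHHA, map_zero]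
  have hAHH : map (map pA pH) pH t = 0 := by
    rw [← hξ, ξmap_eq_tensorRotate, map_map_tensorRotate, hHAH, map_zero]
  exact eq_zero_of_components t hAAA hHAA hAHA hHHA hAAH hHAH hAHH hHHH

variable {δA δH φ ψ}

theorem bbCobracket_comm (hδA : ∀ a, TensorProduct.comm k A A (δA a) = -δA a)
    (hδH : ∀ h, TensorProduct.comm k H H (δH h) = -δH h) (x : A × H) :
    TensorProduct.comm k (A × H) (A × H) (D x) = -D x := by
  simp only [bbCobracket, LinearMap.add_apply, LinearMap.sub_apply, LinearMap.comp_apply,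
    LinearEquiv.coe_coe, map_add, map_sub, ← map_comm, comm_comm, hδA, hδH, map_neg,
    LinearMap.zero_apply, map_zero]
  abel

theorem map_snd_fst_fst_coJacobiator_bbCobracket
    (hδA : ∀ a, TensorProduct.comm k A A (δA a) = -δA a)
    (hcomodH : ∀ h, map LinearMap.id δA (ψ h)
        = TensorProduct.assoc k H A A (map ψ LinearMap.id (ψ h))
        - map LinearMap.id (TensorProduct.comm k A A).toLinearMap
            (TensorProduct.assoc k H A A (map ψ LinearMap.id (ψ h))))
    (hBB3 : ∀ a, (TensorProduct.assoc k H A A).symm (map LinearMap.id δA (φ a))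
        = map φ LinearMap.id (δA a)
        + map (TensorProduct.comm k A H).toLinearMap LinearMap.id
            ((TensorProduct.assoc k A H A).symm (map LinearMap.id φ (δA a)))
        + map ψ LinearMap.id (φ a)
        - swapR k H A A (map ψ LinearMap.id (φ a)))
    (x : A × H) : map (map pH pA) pA (coJacobiator D x) = 0 := by
  have hφδA : swapR k H A A (map φ LinearMap.id (δA x.1))
      = -map (TensorProduct.comm k A H).toLinearMap LinearMap.id
          ((TensorProduct.assoc k A H A).symm (map LinearMap.id φ (δA x.1))) := by
    conv_lhs => rw [← neg_neg (δA x.1), ← hδA, map_neg, map_neg, map_comm, swapR_comm]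
  have hψψ : (TensorProduct.assoc k H A A).symm (map LinearMap.id δA (ψ x.2))
      = map ψ LinearMap.id (ψ x.2) - swapR k H A A (map ψ LinearMap.id (ψ x.2)) := by
    rw [hcomodH]
    simp [swapR]
  rw [map_map_coJacobiator, map_snd_fst_fst_map_bbCobracket, map_fst_snd_fst_map_bbCobracket,
    map_fst_fst_snd_map_bbCobracket]
  simp only [map_neg, map_add, tensorRotate_map_comm, map_comm, tensorRotate_tensorRotate_comm,
    hφδA, hψψ, hBB3]
  abel

theorem map_snd_snd_fst_coJacobiator_bbCobracket
    (hδH : ∀ h, TensorProduct.comm k H H (δH h) = -δH h)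
    (hcomodA : ∀ a, map δH LinearMap.id (φ a)
        = (TensorProduct.assoc k H H A).symm (map LinearMap.id φ (φ a))
        - map (TensorProduct.comm k H H).toLinearMap LinearMap.id
            ((TensorProduct.assoc k H H A).symm (map LinearMap.id φ (φ a))))
    (hBB4 : ∀ h, map δH LinearMap.id (ψ h)
        = (TensorProduct.assoc k H H A).symm (map LinearMap.id ψ (δH h))
        + swapR k H A H (map ψ LinearMap.id (δH h))
        + (TensorProduct.assoc k H H A).symm (map LinearMap.id φ (ψ h))
        - map (TensorProduct.comm k H H).toLinearMap LinearMap.id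
            ((TensorProduct.assoc k H H A).symm (map LinearMap.id φ (ψ h))))
    (x : A × H) : map (map pH pH) pA (coJacobiator D x) = 0 := by
  have hψδH : tensorRotate k A H H (tensorRotate k H A H (map ψ LinearMap.id (δH x.2)))
      = -(TensorProduct.assoc k H H A).symm (map LinearMap.id ψ (δH x.2)) := by
    conv_lhs => rw [← neg_neg (δH x.2), ← hδH, map_neg, map_neg, map_neg, map_comm,
      tensorRotate_tensorRotate_comm]
  rw [map_map_coJacobiator, map_snd_snd_fst_map_bbCobracket, map_fst_snd_snd_map_bbCobracket,
    map_snd_fst_snd_map_bbCobracket]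
  -- two passes: `tensorRotate_map_comm` has to fire before `map_comm` moves the inner flips out
  simp only [map_neg, map_add, map_sub, hψδH, tensorRotate_map_comm]
  simp only [map_comm, swapR_comm, tensorRotate_tensorRotate_comm, hcomodA, hBB4]
  abel

end DoubleCross

theorem matched_pair_coalgebra_double_cross_coproduct_general
    (δA : A →ₗ[k] A ⊗[k] A) (δH : H →ₗ[k] H ⊗[k] H)
    (φ : A →ₗ[k] H ⊗[k] A) (ψ : H →ₗ[k] H ⊗[k] A)
    (hcA : IsLieCoalg δA) (hcH : IsLieCoalg δH)
    -- `A` is a left `H`-comodule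
    (hcomodA : (∀ a, TensorProduct.map δH LinearMap.id (φ a)
        = (TensorProduct.assoc k H H A).symm (TensorProduct.map LinearMap.id φ (φ a))
        - TensorProduct.map (TensorProduct.comm k H H).toLinearMap LinearMap.id
            ((TensorProduct.assoc k H H A).symm (TensorProduct.map LinearMap.id φ (φ a)))))
    -- `H` is a right `A`-comodule
    (hcomodH : (∀ h, TensorProduct.map LinearMap.id δA (ψ h)
        = TensorProduct.assoc k H A A (TensorProduct.map ψ LinearMap.id (ψ h))
        - TensorProduct.map LinearMap.id (TensorProduct.comm k A A).toLinearMap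
            (TensorProduct.assoc k H A A (TensorProduct.map ψ LinearMap.id (ψ h)))))
    -- (BB3)
    (hBB3 : (∀ a, (TensorProduct.assoc k H A A).symm (TensorProduct.map LinearMap.id δA (φ a))
        = TensorProduct.map φ LinearMap.id (δA a)
        + TensorProduct.map (TensorProduct.comm k A H).toLinearMap LinearMap.id
            ((TensorProduct.assoc k A H A).symm (TensorProduct.map LinearMap.id φ (δA a)))
        + TensorProduct.map ψ LinearMap.id (φ a)
        - swapR k H A A (TensorProduct.map ψ LinearMap.id (φ a))))
    -- (BB4)
    (hBB4 : (∀ h, TensorProduct.map δH LinearMap.id (ψ h)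
        = (TensorProduct.assoc k H H A).symm (TensorProduct.map LinearMap.id ψ (δH h))
        + swapR k H A H (TensorProduct.map ψ LinearMap.id (δH h))
        + (TensorProduct.assoc k H H A).symm (TensorProduct.map LinearMap.id φ (ψ h))
        - TensorProduct.map (TensorProduct.comm k H H).toLinearMap LinearMap.id
            ((TensorProduct.assoc k H H A).symm (TensorProduct.map LinearMap.id φ (ψ h))))) :
    IsLieCoalg (bbCobracket δA δH φ ψ 0 0) := by
  rw [isLieCoalg_iff] at hcA hcH ⊢
  refine ⟨bbCobracket_comm hcA.1 hcH.1, LinearMap.ext fun x => ?_⟩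
  refine eq_zero_of_ξmap_eq_self _ (ξmap_coJacobiator _ x) ?_
    (map_snd_fst_fst_coJacobiator_bbCobracket hcA.1 hcomodH hBB3 x)
    (map_snd_snd_fst_coJacobiator_bbCobracket hcH.1 hcomodA hBB4 x) ?_
  · rw [map_map_coJacobiator_of_comp_eq _ (map_fst_fst_comp_bbCobracket δA δH φ ψ), hcA.2]
    rfl
  · rw [map_map_coJacobiator_of_comp_eq _ (map_snd_snd_comp_bbCobracket δA δH φ ψ), hcH.2]
    rfl

/-- A matched pair of Lie coalgebras `(A, H, φ, ψ)` yields a Lie coalgebra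
structure on `A ⊕ H` with `δ_D(a) = δ_A(a) + φ(a) − τφ(a)`, `δ_D(h) = δ_H(h) + ψ(h) − τψ(h)`. -/
theorem matched_pair_coalgebra_double_cross_coproduct [CharZero k]
    (δA : A →ₗ[k] A ⊗[k] A) (δH : H →ₗ[k] H ⊗[k] H)
    (φ : A →ₗ[k] H ⊗[k] A) (ψ : H →ₗ[k] H ⊗[k] A)
    (hcA : IsLieCoalg δA) (hcH : IsLieCoalg δH)
    -- `A` is a left `H`-comodule
    (hcomodA : (∀ a, TensorProduct.map δH LinearMap.id (φ a)
        = (TensorProduct.assoc k H H A).symm (TensorProduct.map LinearMap.id φ (φ a))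
        - TensorProduct.map (TensorProduct.comm k H H).toLinearMap LinearMap.id
            ((TensorProduct.assoc k H H A).symm (TensorProduct.map LinearMap.id φ (φ a)))))
    -- `H` is a right `A`-comodule
    (hcomodH : (∀ h, TensorProduct.map LinearMap.id δA (ψ h)
        = TensorProduct.assoc k H A A (TensorProduct.map ψ LinearMap.id (ψ h))
        - TensorProduct.map LinearMap.id (TensorProduct.comm k A A).toLinearMap
            (TensorProduct.assoc k H A A (TensorProduct.map ψ LinearMap.id (ψ h)))))
    -- (BB3)
    (hBB3 : (∀ a, (TensorProduct.assoc k H A A).symm (TensorProduct.map LinearMap.id δA (φ a))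
        = TensorProduct.map φ LinearMap.id (δA a)
        + TensorProduct.map (TensorProduct.comm k A H).toLinearMap LinearMap.id
            ((TensorProduct.assoc k A H A).symm (TensorProduct.map LinearMap.id φ (δA a)))
        + TensorProduct.map ψ LinearMap.id (φ a)
        - swapR k H A A (TensorProduct.map ψ LinearMap.id (φ a))))
    -- (BB4)
    (hBB4 : (∀ h, TensorProduct.map δH LinearMap.id (ψ h)
        = (TensorProduct.assoc k H H A).symm (TensorProduct.map LinearMap.id ψ (δH h))
        + swapR k H A H (TensorProduct.map ψ LinearMap.id (δH h))
        + (TensorProduct.assoc k H H A).symm (TensorProduct.map LinearMap.id φ (ψ h))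
        - TensorProduct.map (TensorProduct.comm k H H).toLinearMap LinearMap.id
            ((TensorProduct.assoc k H H A).symm (TensorProduct.map LinearMap.id φ (ψ h))))) :
    IsLieCoalg (bbCobracket δA δH φ ψ 0 0) :=
  matched_pair_coalgebra_double_cross_coproduct_general δA δH φ ψ hcA hcH hcomodA hcomodH hBB3 hBB4

end
end

section
/- Let A and H be Lie bialgebras and R = R¹ ⊗ R² ∈ H ⊗ A (summation implicit; r = r¹ ⊗ r² denotes a second copy of R) a skew-copairing, i.e. R¹ ⊗ δ_A(R²) = [R¹, r¹] ⊗ r² ⊗ R² in H ⊗ A ⊗ A and δ_H(R¹) ⊗ R² = R¹ ⊗ r¹ ⊗ [R², r²] in H ⊗ H ⊗ A. Define φ : A → H ⊗ A by φ(a) = R¹ ⊗ [a, R²] and ψ : H → H ⊗ A by ψ(h) = [h, R¹] ⊗ R². Then (A, H, φ, ψ) is a matched pair of Lie coalgebras, A is a left H-comodule Lie algebra, H is a right A-comodule Lie algebra, condition (AA2): [h, a₍₋₁₎] ⊗ a₍₀₎ + h₍₀₎ ⊗ [h₍₁₎, a] = 0 holds, and consequently A ⊕ H with the direct sum Lie algebra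 structure and the cobracket δ_D(a) = δ_A(a) + φ(a) − τφ(a), δ_D(h) = δ_H(h) + ψ(h) − τψ(h) is a Lie bialgebra (denoted A ▶◀^R H). -/
/-!
The coactions are built from one tensor `R`, so each identity is checked on `R` or on `R ⊗ R`.
Moving `δ_H` (resp. `δ_A`) past `φ` (resp. `ψ`) and applying the skew-copairing conditions turns
both sides of the comodule axioms and of (BB3), (BB4) into expressions in two copies of `R`; the
comodule axioms then reduce to the Jacobi identity, (BB3) and (BB4) to the cocycle condition (LB)
and antisymmetry. The comodule Lie algebra conditions say that inner derivations are derivations,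
and (AA2) is antisymmetry.

The double `A ⊕ H` is then a Lie bialgebra for any coactions satisfying these axioms: the
co-Jacobi identity on `A` (resp. `H`) splits into its components in `A ⊗ A ⊗ A`, `H ⊗ A ⊗ A`,
`H ⊗ H ⊗ A` (resp. `H ⊗ H ⊗ H`, …) and their cyclic rotations, each of which is co-Jacobi, (BB3)
or (BB4), or a comodule axiom; (LB) for the double follows from (LB) for `A` and `H`, the comodule
Lie algebra conditions and (AA2).
-/

open TensorProduct

noncomputable section

variable {k : Type*} [Field k]
variable {A H : Type*} [AddCommGroup A] [Module k A] [AddCommGroup H] [Module k H]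

/-- The left coaction `φ(a) := R¹ ⊗ [a, R²]` defined from a copairing `R ∈ H ⊗ A`. -/
def copairPhi (brA : A →ₗ[k] A →ₗ[k] A) (R : H ⊗[k] A) : A →ₗ[k] H ⊗[k] A where
  toFun a := TensorProduct.map LinearMap.id (brA a) R
  map_add' a b := by simp [map_add, TensorProduct.map_add_right]
  map_smul' c a := by simp [map_smul, TensorProduct.map_smul_right]

/-- The right coaction `ψ(h) := [h, R¹] ⊗ R²` defined from a copairing `R ∈ H ⊗ A`. -/
def copairPsi (brH : H →ₗ[k] H →ₗ[k] H) (R : H ⊗[k] A) : H →ₗ[k] H ⊗[k] A where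
  toFun h := TensorProduct.map (brH h) LinearMap.id R
  map_add' h g := by simp [map_add, TensorProduct.map_add_left]
  map_smul' c h := by simp [map_smul, TensorProduct.map_smul_left]

section TensorBookkeeping

variable {M N P Q M' N' : Type*}
  [AddCommGroup M] [Module k M] [AddCommGroup N] [Module k N]
  [AddCommGroup P] [Module k P] [AddCommGroup Q] [Module k Q]
  [AddCommGroup M'] [Module k M'] [AddCommGroup N'] [Module k N']

def rotate3 (k M N P : Type*) [Field k] [AddCommGroup M] [Module k M] [AddCommGroup N]
    [Module k N] [AddCommGroup P] [Module k P] :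
    ((M ⊗[k] N) ⊗[k] P) →ₗ[k] ((N ⊗[k] P) ⊗[k] M) :=
  (TensorProduct.comm k M (N ⊗[k] P)).toLinearMap ∘ₗ (TensorProduct.assoc k M N P).toLinearMap

lemma ξmap_eq_rotate3 {L : Type*} [AddCommGroup L] [Module k L] :
    ξmap k L = rotate3 k L L L := rfl

@[simp] lemma swapR_tmul (x : M) (y : N) (z : P) :
    swapR k M N P ((x ⊗ₜ y) ⊗ₜ z) = (x ⊗ₜ z) ⊗ₜ y := rfl

lemma swapR_apply (w : (M ⊗[k] N) ⊗[k] P) :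
    swapR k M N P w = (TensorProduct.assoc k M P N).symm
      (TensorProduct.map LinearMap.id (TensorProduct.comm k N P).toLinearMap
        (TensorProduct.assoc k M N P w)) := rfl

@[simp] lemma rotate3_rotate3_rotate3 (w : (M ⊗[k] N) ⊗[k] P) :
    rotate3 k P M N (rotate3 k N P M (rotate3 k M N P w)) = w :=
  LinearMap.congr_fun (f := rotate3 k P M N ∘ₗ rotate3 k N P M ∘ₗ rotate3 k M N P)
    (g := LinearMap.id) (TensorProduct.ext_threefold fun _ _ _ => rfl) w

lemma rotate3_rotate3 (w : (M ⊗[k] N) ⊗[k] P) :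
    rotate3 k N P M (rotate3 k M N P w)
      = (TensorProduct.assoc k P M N).symm (TensorProduct.comm k (M ⊗[k] N) P w) :=
  LinearMap.congr_fun (f := rotate3 k N P M ∘ₗ rotate3 k M N P)
    (g := (TensorProduct.assoc k P M N).symm.toLinearMap ∘ₗ
      (TensorProduct.comm k (M ⊗[k] N) P).toLinearMap)
    (TensorProduct.ext_threefold fun _ _ _ => rfl) w

lemma rotate3_map_comm (w : (M ⊗[k] N) ⊗[k] P) :
    rotate3 k N M P (TensorProduct.map (TensorProduct.comm k M N).toLinearMap LinearMap.id w)
      = swapR k M N P w :=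
  LinearMap.congr_fun (f := rotate3 k N M P ∘ₗ
      TensorProduct.map (TensorProduct.comm k M N).toLinearMap LinearMap.id)
    (g := swapR k M N P) (TensorProduct.ext_threefold fun _ _ _ => rfl) w

lemma swapR_eq_map_comm_assoc_symm (w : (M ⊗[k] N) ⊗[k] P) :
    swapR k M N P w = TensorProduct.map (TensorProduct.comm k P M).toLinearMap LinearMap.id
      ((TensorProduct.assoc k P M N).symm (TensorProduct.comm k (M ⊗[k] N) P w)) :=
  LinearMap.congr_fun (f := swapR k M N P)
    (g := TensorProduct.map (TensorProduct.comm k P M).toLinearMap LinearMap.id ∘ₗ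
      (TensorProduct.assoc k P M N).symm.toLinearMap ∘ₗ
      (TensorProduct.comm k (M ⊗[k] N) P).toLinearMap)
    (TensorProduct.ext_threefold fun _ _ _ => rfl) w

lemma ξmap_map_map {L X Y Z : Type*} [AddCommGroup L] [Module k L] [AddCommGroup X]
    [Module k X] [AddCommGroup Y] [Module k Y] [AddCommGroup Z] [Module k Z]
    (e₁ : X →ₗ[k] L) (e₂ : Y →ₗ[k] L) (e₃ : Z →ₗ[k] L) (w : (X ⊗[k] Y) ⊗[k] Z) :
    ξmap k L (TensorProduct.map (TensorProduct.map e₁ e₂) e₃ w)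
      = TensorProduct.map (TensorProduct.map e₂ e₃) e₁ (rotate3 k X Y Z w) :=
  LinearMap.congr_fun (f := ξmap k L ∘ₗ TensorProduct.map (TensorProduct.map e₁ e₂) e₃)
    (g := TensorProduct.map (TensorProduct.map e₂ e₃) e₁ ∘ₗ rotate3 k X Y Z)
    (TensorProduct.ext_threefold fun _ _ _ => rfl) w

lemma rotate3_rotate3_map_comm (g : Q →ₗ[k] M ⊗[k] N) (w : P ⊗[k] Q) :
    rotate3 k N P M (rotate3 k M N P
        (TensorProduct.map g LinearMap.id (TensorProduct.comm k P Q w)))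
      = (TensorProduct.assoc k P M N).symm (TensorProduct.map LinearMap.id g w) := by
  rw [rotate3_rotate3, ← TensorProduct.map_comm, TensorProduct.comm_comm]

lemma rotate3_map_comm_comp (g : P →ₗ[k] M ⊗[k] N) (w : P ⊗[k] Q) :
    rotate3 k N M Q
        (TensorProduct.map ((TensorProduct.comm k M N).toLinearMap ∘ₗ g) LinearMap.id w)
      = swapR k M N Q (TensorProduct.map g LinearMap.id w) := by
  rw [← rotate3_map_comm, TensorProduct.map_map, LinearMap.id_comp]

lemma rotate3_map_comm_comp_comm (g : Q →ₗ[k] M ⊗[k] N) (w : P ⊗[k] Q) :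
    rotate3 k N M P
        (TensorProduct.map ((TensorProduct.comm k M N).toLinearMap ∘ₗ g) LinearMap.id
          (TensorProduct.comm k P Q w))
      = TensorProduct.map (TensorProduct.comm k P M).toLinearMap LinearMap.id
          ((TensorProduct.assoc k P M N).symm (TensorProduct.map LinearMap.id g w)) := by
  rw [rotate3_map_comm_comp, swapR_eq_map_comm_assoc_symm, ← TensorProduct.map_comm,
    TensorProduct.comm_comm]

lemma map_map_id_of_comp_eq {X : Type*} [AddCommGroup X] [Module k X]
    {f : M →ₗ[k] N} {e₀ : M →ₗ[k] X} {e₁ : N →ₗ[k] X} {L : X →ₗ[k] X}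
    (hL : L ∘ₗ e₀ = e₁ ∘ₗ f) (e : P →ₗ[k] Q) (w : M ⊗[k] P) :
    TensorProduct.map L LinearMap.id (TensorProduct.map e₀ e w)
      = TensorProduct.map e₁ e (TensorProduct.map f LinearMap.id w) := by
  rw [TensorProduct.map_map, TensorProduct.map_map, hL]; rfl

lemma map_id_map_of_comp_eq {X : Type*} [AddCommGroup X] [Module k X]
    {f : M →ₗ[k] N} {e₀ : M →ₗ[k] X} {e₁ : N →ₗ[k] X} {L : X →ₗ[k] X}
    (hL : L ∘ₗ e₀ = e₁ ∘ₗ f) (e : P →ₗ[k] Q) (w : P ⊗[k] M) :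
    TensorProduct.map LinearMap.id L (TensorProduct.map e e₀ w)
      = TensorProduct.map e e₁ (TensorProduct.map LinearMap.id f w) := by
  rw [TensorProduct.map_map, TensorProduct.map_map, hL]; rfl

lemma map_id_map_comm (f : M →ₗ[k] M') (g : N →ₗ[k] N') (x : M ⊗[k] N) :
    TensorProduct.map f LinearMap.id (TensorProduct.map LinearMap.id g x)
      = TensorProduct.map LinearMap.id g (TensorProduct.map f LinearMap.id x) := by
  rw [TensorProduct.map_map, TensorProduct.map_map]; rfl

lemma map_id_comp_apply (g₂ : N →ₗ[k] N') (g₁ : P →ₗ[k] N) (x : M ⊗[k] P) :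
    TensorProduct.map LinearMap.id (g₂ ∘ₗ g₁) x
      = TensorProduct.map LinearMap.id g₂ (TensorProduct.map LinearMap.id g₁ x) := by
  rw [TensorProduct.map_map, LinearMap.id_comp]

lemma map_comp_id_apply (f₂ : M →ₗ[k] M') (f₁ : P →ₗ[k] M) (x : P ⊗[k] N) :
    TensorProduct.map (f₂ ∘ₗ f₁) LinearMap.id x
      = TensorProduct.map f₂ LinearMap.id (TensorProduct.map f₁ LinearMap.id x) := by
  rw [TensorProduct.map_map, LinearMap.id_comp]

end TensorBookkeeping

namespace IsLieAlg

variable {L : Type*} [AddCommGroup L] [Module k L] {br : L →ₗ[k] L →ₗ[k] L}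

lemma flip_eq_neg (hbr : IsLieAlg br) (x : L) : br.flip x = - br x :=
  LinearMap.ext fun y => hbr.1 y x

lemma bracket_bracket_right (hbr : IsLieAlg br) (a x y : L) :
    br a (br x y) = br (br a x) y - br (br a y) x := by
  have jacobi := hbr.2 x y a
  rw [hbr.1 (br x y) a, hbr.1 y a, map_neg, LinearMap.neg_apply] at jacobi
  linear_combination (norm := abel) -jacobi

lemma bracket_bracket_left (hbr : IsLieAlg br) (a b x : L) :
    br (br a b) x = br (br a x) b + br a (br b x) := by
  rw [hbr.bracket_bracket_right a b x]
  abel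

end IsLieAlg

def IsCocycle {L : Type*} [AddCommGroup L] [Module k L]
    (br : L →ₗ[k] L →ₗ[k] L) (δ : L →ₗ[k] L ⊗[k] L) : Prop :=
  ∀ x y, δ (br x y)
    = TensorProduct.map (br x) LinearMap.id (δ y)
    + TensorProduct.map LinearMap.id (br x) (δ y)
    + TensorProduct.map LinearMap.id (br.flip y) (δ x)
    + TensorProduct.map (br.flip y) LinearMap.id (δ x)

def IsLeftComodule (δH : H →ₗ[k] H ⊗[k] H) (φ : A →ₗ[k] H ⊗[k] A) : Prop :=
  ∀ a, TensorProduct.map δH LinearMap.id (φ a)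
    = (TensorProduct.assoc k H H A).symm (TensorProduct.map LinearMap.id φ (φ a))
    - TensorProduct.map (TensorProduct.comm k H H).toLinearMap LinearMap.id
        ((TensorProduct.assoc k H H A).symm (TensorProduct.map LinearMap.id φ (φ a)))

def IsRightComodule (δA : A →ₗ[k] A ⊗[k] A) (ψ : H →ₗ[k] H ⊗[k] A) : Prop :=
  ∀ h, TensorProduct.map LinearMap.id δA (ψ h)
    = TensorProduct.assoc k H A A (TensorProduct.map ψ LinearMap.id (ψ h))
    - TensorProduct.map LinearMap.id (TensorProduct.comm k A A).toLinearMap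
        (TensorProduct.assoc k H A A (TensorProduct.map ψ LinearMap.id (ψ h)))

def SatisfiesBB3 (δA : A →ₗ[k] A ⊗[k] A) (φ : A →ₗ[k] H ⊗[k] A) (ψ : H →ₗ[k] H ⊗[k] A) :
    Prop :=
  ∀ a, (TensorProduct.assoc k H A A).symm (TensorProduct.map LinearMap.id δA (φ a))
    = TensorProduct.map φ LinearMap.id (δA a)
    + TensorProduct.map (TensorProduct.comm k A H).toLinearMap LinearMap.id
        ((TensorProduct.assoc k A H A).symm (TensorProduct.map LinearMap.id φ (δA a)))
    + TensorProduct.map ψ LinearMap.id (φ a)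
    - swapR k H A A (TensorProduct.map ψ LinearMap.id (φ a))

def SatisfiesBB4 (δH : H →ₗ[k] H ⊗[k] H) (φ : A →ₗ[k] H ⊗[k] A) (ψ : H →ₗ[k] H ⊗[k] A) :
    Prop :=
  ∀ h, TensorProduct.map δH LinearMap.id (ψ h)
    = (TensorProduct.assoc k H H A).symm (TensorProduct.map LinearMap.id ψ (δH h))
    + swapR k H A H (TensorProduct.map ψ LinearMap.id (δH h))
    + (TensorProduct.assoc k H H A).symm (TensorProduct.map LinearMap.id φ (ψ h))
    - TensorProduct.map (TensorProduct.comm k H H).toLinearMap LinearMap.id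
        ((TensorProduct.assoc k H H A).symm (TensorProduct.map LinearMap.id φ (ψ h)))

def IsLeftComoduleLieAlg (brA : A →ₗ[k] A →ₗ[k] A) (φ : A →ₗ[k] H ⊗[k] A) : Prop :=
  ∀ a b, φ (brA a b)
    = TensorProduct.map LinearMap.id (brA.flip b) (φ a)
    + TensorProduct.map LinearMap.id (brA a) (φ b)

def IsRightComoduleLieAlg (brH : H →ₗ[k] H →ₗ[k] H) (ψ : H →ₗ[k] H ⊗[k] A) : Prop :=
  ∀ h g, ψ (brH h g)
    = TensorProduct.map (brH h) LinearMap.id (ψ g)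
    + TensorProduct.map (brH.flip g) LinearMap.id (ψ h)

def SatisfiesAA2 (brA : A →ₗ[k] A →ₗ[k] A) (brH : H →ₗ[k] H →ₗ[k] H)
    (φ : A →ₗ[k] H ⊗[k] A) (ψ : H →ₗ[k] H ⊗[k] A) : Prop :=
  ∀ h a, TensorProduct.map (brH h) LinearMap.id (φ a)
    + TensorProduct.map LinearMap.id (brA.flip a) (ψ h) = 0

lemma SatisfiesAA2.flip {brA : A →ₗ[k] A →ₗ[k] A} {brH : H →ₗ[k] H →ₗ[k] H}
    {φ : A →ₗ[k] H ⊗[k] A} {ψ : H →ₗ[k] H ⊗[k] A} (hAA2 : SatisfiesAA2 brA brH φ ψ)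
    (hA : IsLieAlg brA) (hH : IsLieAlg brH) (h : H) (a : A) :
    TensorProduct.map (brH.flip h) LinearMap.id (φ a)
      + TensorProduct.map LinearMap.id (brA a) (ψ h) = 0 := by
  have hbrA : brA a = (-1 : k) • brA.flip a := by rw [hA.flip_eq_neg, neg_one_smul, neg_neg]
  rw [hH.flip_eq_neg, ← neg_one_smul k (brH h), hbrA, TensorProduct.map_smul_left,
    TensorProduct.map_smul_right, LinearMap.smul_apply, LinearMap.smul_apply, ← smul_add,
    hAA2 h a, smul_zero]

section Copairing

variable {brA : A →ₗ[k] A →ₗ[k] A} {δA : A →ₗ[k] A ⊗[k] A}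
  {brH : H →ₗ[k] H →ₗ[k] H} {δH : H →ₗ[k] H ⊗[k] H} {R : H ⊗[k] A}

@[simp] lemma copairPhi_apply (a : A) :
    copairPhi brA R a = TensorProduct.map LinearMap.id (brA a) R := rfl

@[simp] lemma copairPsi_apply (h : H) :
    copairPsi brH R h = TensorProduct.map (brH h) LinearMap.id R := rfl

@[simp] lemma copairPhi_zero : copairPhi brA (0 : H ⊗[k] A) = 0 := by
  ext; simp

@[simp] lemma copairPsi_zero : copairPsi brH (0 : H ⊗[k] A) = 0 := by
  ext; simp

lemma copairPhi_add (u v : H ⊗[k] A) :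
    copairPhi brA (u + v) = copairPhi brA u + copairPhi brA v := by
  ext; simp

lemma copairPsi_add (u v : H ⊗[k] A) :
    copairPsi brH (u + v) = copairPsi brH u + copairPsi brH v := by
  ext; simp

lemma isLeftComoduleLieAlg_copairPhi (hA : IsLieAlg brA) (R : H ⊗[k] A) :
    IsLeftComoduleLieAlg brA (copairPhi brA R) := by
  intro a b
  simp only [copairPhi_apply]
  induction R using TensorProduct.induction_on with
  | zero => simp
  | add u v hu hv => simp only [map_add, hu, hv]; abel
  | tmul p x => simp [hA.bracket_bracket_left a b x, TensorProduct.tmul_add]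

lemma isRightComoduleLieAlg_copairPsi (hH : IsLieAlg brH) (R : H ⊗[k] A) :
    IsRightComoduleLieAlg brH (copairPsi brH R) := by
  intro h g
  simp only [copairPsi_apply]
  induction R using TensorProduct.induction_on with
  | zero => simp
  | add u v hu hv => simp only [map_add, hu, hv]; abel
  | tmul p x => simp [hH.bracket_bracket_left h g p, TensorProduct.add_tmul, add_comm]

lemma satisfiesAA2_copair (hA : IsLieAlg brA) (R : H ⊗[k] A) :
    SatisfiesAA2 brA brH (copairPhi brA R) (copairPsi brH R) := by
  intro h a
  simp only [copairPhi_apply, copairPsi_apply]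
  induction R using TensorProduct.induction_on with
  | zero => simp
  | add u v hu hv => simp only [map_add]; linear_combination (norm := abel) hu + hv
  | tmul p x => simp [hA.1 x a, TensorProduct.tmul_neg]

lemma copairPhi_leftComodule_pair (hA : IsLieAlg brA) (a : A) (u v : H ⊗[k] A) :
    TensorProduct.map LinearMap.id (brA a)
        (TensorProduct.map LinearMap.id (TensorProduct.lift brA)
          (TensorProduct.tensorTensorTensorComm k H A H A (u ⊗ₜ v)))
      = (TensorProduct.assoc k H H A).symm
          (TensorProduct.map LinearMap.id (copairPhi brA v)
            (TensorProduct.map LinearMap.id (brA a) u))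
      - TensorProduct.map (TensorProduct.comm k H H).toLinearMap LinearMap.id
          ((TensorProduct.assoc k H H A).symm
            (TensorProduct.map LinearMap.id (copairPhi brA u)
              (TensorProduct.map LinearMap.id (brA a) v))) := by
  induction u using TensorProduct.induction_on with
  | zero => simp
  | add u₁ u₂ h₁ h₂ =>
    simp only [TensorProduct.add_tmul, map_add, copairPhi_add, TensorProduct.map_add_right,
      LinearMap.add_apply, h₁, h₂]
    abel
  | tmul p x =>
    induction v using TensorProduct.induction_on with
    | zero => simp
    | add v₁ v₂ h₁ h₂ =>
      simp only [TensorProduct.tmul_add, map_add, copairPhi_add, TensorProduct.map_add_right,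
        LinearMap.add_apply, h₁, h₂]
      abel
    | tmul q y => simp [hA.bracket_bracket_right a x y, TensorProduct.tmul_sub]

lemma isLeftComodule_copairPhi (hA : IsLieAlg brA)
    (hR2 : TensorProduct.map δH LinearMap.id R
        = TensorProduct.map LinearMap.id (TensorProduct.lift brA)
            (TensorProduct.tensorTensorTensorComm k H A H A (R ⊗ₜ[k] R))) :
    IsLeftComodule δH (copairPhi brA R) := by
  intro a
  rw [copairPhi_apply, map_id_map_comm, hR2]
  exact copairPhi_leftComodule_pair hA a R R

lemma copairPsi_rightComodule_pair (hH : IsLieAlg brH) (h : H) (u v : H ⊗[k] A) :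
    TensorProduct.map (brH h) LinearMap.id
        (TensorProduct.map (TensorProduct.lift brH) (TensorProduct.comm k A A).toLinearMap
          (TensorProduct.tensorTensorTensorComm k H A H A (u ⊗ₜ v)))
      = TensorProduct.assoc k H A A
          (TensorProduct.map (copairPsi brH v) LinearMap.id
            (TensorProduct.map (brH h) LinearMap.id u))
      - TensorProduct.map LinearMap.id (TensorProduct.comm k A A).toLinearMap
          (TensorProduct.assoc k H A A
            (TensorProduct.map (copairPsi brH u) LinearMap.id
              (TensorProduct.map (brH h) LinearMap.id v))) := by
  induction u using TensorProduct.induction_on with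
  | zero => simp
  | add u₁ u₂ h₁ h₂ =>
    simp only [TensorProduct.add_tmul, map_add, copairPsi_add, TensorProduct.map_add_left,
      LinearMap.add_apply, h₁, h₂]
    abel
  | tmul p x =>
    induction v using TensorProduct.induction_on with
    | zero => simp
    | add v₁ v₂ h₁ h₂ =>
      simp only [TensorProduct.tmul_add, map_add, copairPsi_add, TensorProduct.map_add_left,
        LinearMap.add_apply, h₁, h₂]
      abel
    | tmul q y => simp [hH.bracket_bracket_right h p q, TensorProduct.sub_tmul]

lemma isRightComodule_copairPsi (hH : IsLieAlg brH)
    (hR1 : TensorProduct.map LinearMap.id δA R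
        = TensorProduct.map (TensorProduct.lift brH) (TensorProduct.comm k A A).toLinearMap
            (TensorProduct.tensorTensorTensorComm k H A H A (R ⊗ₜ[k] R))) :
    IsRightComodule δA (copairPsi brH R) := by
  intro h
  rw [copairPsi_apply, ← map_id_map_comm, hR1]
  exact copairPsi_rightComodule_pair hH h R R

end Copairing

section MatchedPair

variable {brA : A →ₗ[k] A →ₗ[k] A} {δA : A →ₗ[k] A ⊗[k] A}
  {brH : H →ₗ[k] H →ₗ[k] H} {δH : H →ₗ[k] H ⊗[k] H} {R : H ⊗[k] A}

lemma assoc_symm_tmul_map_id_flip (brA : A →ₗ[k] A →ₗ[k] A) (p : H) (x : A) (w : A ⊗[k] A) :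
    (TensorProduct.assoc k H A A).symm (p ⊗ₜ TensorProduct.map LinearMap.id (brA.flip x) w)
      = TensorProduct.map (TensorProduct.comm k A H).toLinearMap LinearMap.id
          ((TensorProduct.assoc k A H A).symm
            (TensorProduct.map LinearMap.id (copairPhi brA (p ⊗ₜ x)) w)) := by
  induction w using TensorProduct.induction_on with
  | zero => simp
  | add u v hu hv => simp only [map_add, TensorProduct.tmul_add, hu, hv]
  | tmul a₁ a₂ => simp

lemma assoc_symm_tmul_map_flip_id (brA : A →ₗ[k] A →ₗ[k] A) (p : H) (x : A) (w : A ⊗[k] A) :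
    (TensorProduct.assoc k H A A).symm (p ⊗ₜ TensorProduct.map (brA.flip x) LinearMap.id w)
      = TensorProduct.map (copairPhi brA (p ⊗ₜ x)) LinearMap.id w := by
  induction w using TensorProduct.induction_on with
  | zero => simp
  | add u v hu hv => simp only [map_add, TensorProduct.tmul_add, hu, hv]
  | tmul a₁ a₂ => simp

lemma assoc_symm_map_id_cobracket_bracket (hLB : IsCocycle brA δA) (a : A) (u : H ⊗[k] A) :
    (TensorProduct.assoc k H A A).symm (TensorProduct.map LinearMap.id (δA ∘ₗ brA a) u)
      = (TensorProduct.assoc k H A A).symm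
          (TensorProduct.map LinearMap.id (TensorProduct.map (brA a) LinearMap.id ∘ₗ δA) u)
      + (TensorProduct.assoc k H A A).symm
          (TensorProduct.map LinearMap.id (TensorProduct.map LinearMap.id (brA a) ∘ₗ δA) u)
      + TensorProduct.map (TensorProduct.comm k A H).toLinearMap LinearMap.id
          ((TensorProduct.assoc k A H A).symm
            (TensorProduct.map LinearMap.id (copairPhi brA u) (δA a)))
      + TensorProduct.map (copairPhi brA u) LinearMap.id (δA a) := by
  induction u using TensorProduct.induction_on with
  | zero => simp
  | add u v hu hv =>
    simp only [map_add, copairPhi_add, TensorProduct.map_add_left, TensorProduct.map_add_right,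
      LinearMap.add_apply]
    linear_combination (norm := abel) hu + hv
  | tmul p x =>
    simp only [TensorProduct.map_tmul, LinearMap.id_coe, id_eq, LinearMap.coe_comp,
      Function.comp_apply, hLB a x, TensorProduct.tmul_add, map_add,
      assoc_symm_tmul_map_id_flip, assoc_symm_tmul_map_flip_id]

lemma copair_bb3_pair (hH : IsLieAlg brH) (a : A) (u v : H ⊗[k] A) :
    (TensorProduct.assoc k H A A).symm
        (TensorProduct.map LinearMap.id (TensorProduct.map (brA a) LinearMap.id)
          (TensorProduct.map (TensorProduct.lift brH) (TensorProduct.comm k A A).toLinearMap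
            (TensorProduct.tensorTensorTensorComm k H A H A (u ⊗ₜ v))))
      + (TensorProduct.assoc k H A A).symm
          (TensorProduct.map LinearMap.id (TensorProduct.map LinearMap.id (brA a))
            (TensorProduct.map (TensorProduct.lift brH) (TensorProduct.comm k A A).toLinearMap
              (TensorProduct.tensorTensorTensorComm k H A H A (u ⊗ₜ v))))
      = TensorProduct.map (copairPsi brH v) LinearMap.id
          (TensorProduct.map LinearMap.id (brA a) u)
      - swapR k H A A (TensorProduct.map (copairPsi brH u) LinearMap.id
          (TensorProduct.map LinearMap.id (brA a) v)) := by
  induction u using TensorProduct.induction_on with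
  | zero => simp
  | add u₁ u₂ h₁ h₂ =>
    simp only [TensorProduct.add_tmul, map_add, copairPsi_add, TensorProduct.map_add_left,
      LinearMap.add_apply]
    linear_combination (norm := abel) h₁ + h₂
  | tmul p x =>
    induction v using TensorProduct.induction_on with
    | zero => simp
    | add v₁ v₂ h₁ h₂ =>
      simp only [TensorProduct.tmul_add, map_add, copairPsi_add, TensorProduct.map_add_left,
        LinearMap.add_apply]
      linear_combination (norm := abel) h₁ + h₂
    | tmul q y =>
      simp [hH.1 q p, TensorProduct.neg_tmul]
      abel

lemma satisfiesBB3_copair (hH : IsLieAlg brH) (hLB : IsCocycle brA δA)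
    (hR1 : TensorProduct.map LinearMap.id δA R
        = TensorProduct.map (TensorProduct.lift brH) (TensorProduct.comm k A A).toLinearMap
            (TensorProduct.tensorTensorTensorComm k H A H A (R ⊗ₜ[k] R))) :
    SatisfiesBB3 δA (copairPhi brA R) (copairPsi brH R) := by
  intro a
  have hsplit := assoc_symm_map_id_cobracket_bracket hLB a R
  simp only [map_id_comp_apply, hR1] at hsplit
  rw [copairPhi_apply, hsplit]
  linear_combination (norm := abel) copair_bb3_pair hH a R R

lemma map_id_flip_tmul (brH : H →ₗ[k] H →ₗ[k] H) (p : H) (x : A) (w : H ⊗[k] H) :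
    TensorProduct.map LinearMap.id (brH.flip p) w ⊗ₜ x
      = (TensorProduct.assoc k H H A).symm
          (TensorProduct.map LinearMap.id (copairPsi brH (p ⊗ₜ x)) w) := by
  induction w using TensorProduct.induction_on with
  | zero => simp
  | add u v hu hv => simp only [map_add, TensorProduct.add_tmul, hu, hv]
  | tmul h₁ h₂ => simp

lemma map_flip_id_tmul (brH : H →ₗ[k] H →ₗ[k] H) (p : H) (x : A) (w : H ⊗[k] H) :
    TensorProduct.map (brH.flip p) LinearMap.id w ⊗ₜ x
      = swapR k H A H (TensorProduct.map (copairPsi brH (p ⊗ₜ x)) LinearMap.id w) := by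
  induction w using TensorProduct.induction_on with
  | zero => simp
  | add u v hu hv => simp only [map_add, TensorProduct.add_tmul, hu, hv]
  | tmul h₁ h₂ => simp

lemma map_cobracket_bracket_id (hLB : IsCocycle brH δH) (h : H) (u : H ⊗[k] A) :
    TensorProduct.map (δH ∘ₗ brH h) LinearMap.id u
      = TensorProduct.map (TensorProduct.map (brH h) LinearMap.id ∘ₗ δH) LinearMap.id u
      + TensorProduct.map (TensorProduct.map LinearMap.id (brH h) ∘ₗ δH) LinearMap.id u
      + (TensorProduct.assoc k H H A).symm
          (TensorProduct.map LinearMap.id (copairPsi brH u) (δH h))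
      + swapR k H A H (TensorProduct.map (copairPsi brH u) LinearMap.id (δH h)) := by
  induction u using TensorProduct.induction_on with
  | zero => simp
  | add u v hu hv =>
    simp only [map_add, copairPsi_add, TensorProduct.map_add_left, TensorProduct.map_add_right,
      LinearMap.add_apply]
    linear_combination (norm := abel) hu + hv
  | tmul p x =>
    simp only [TensorProduct.map_tmul, LinearMap.id_coe, id_eq, LinearMap.coe_comp,
      Function.comp_apply, hLB h p, TensorProduct.add_tmul, map_id_flip_tmul, map_flip_id_tmul]

lemma copair_bb4_pair (hA : IsLieAlg brA) (h : H) (u v : H ⊗[k] A) :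
    TensorProduct.map (TensorProduct.map (brH h) LinearMap.id) LinearMap.id
        (TensorProduct.map LinearMap.id (TensorProduct.lift brA)
          (TensorProduct.tensorTensorTensorComm k H A H A (u ⊗ₜ v)))
      + TensorProduct.map (TensorProduct.map LinearMap.id (brH h)) LinearMap.id
          (TensorProduct.map LinearMap.id (TensorProduct.lift brA)
            (TensorProduct.tensorTensorTensorComm k H A H A (u ⊗ₜ v)))
      = (TensorProduct.assoc k H H A).symm
          (TensorProduct.map LinearMap.id (copairPhi brA v)
            (TensorProduct.map (brH h) LinearMap.id u))
      - TensorProduct.map (TensorProduct.comm k H H).toLinearMap LinearMap.id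
          ((TensorProduct.assoc k H H A).symm
            (TensorProduct.map LinearMap.id (copairPhi brA u)
              (TensorProduct.map (brH h) LinearMap.id v))) := by
  induction u using TensorProduct.induction_on with
  | zero => simp
  | add u₁ u₂ h₁ h₂ =>
    simp only [TensorProduct.add_tmul, map_add, copairPhi_add, TensorProduct.map_add_right,
      LinearMap.add_apply]
    linear_combination (norm := abel) h₁ + h₂
  | tmul p x =>
    induction v using TensorProduct.induction_on with
    | zero => simp
    | add v₁ v₂ h₁ h₂ =>
      simp only [TensorProduct.tmul_add, map_add, copairPhi_add, TensorProduct.map_add_right,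
        LinearMap.add_apply]
      linear_combination (norm := abel) h₁ + h₂
    | tmul q y => simp [hA.1 y x, TensorProduct.tmul_neg]

lemma satisfiesBB4_copair (hA : IsLieAlg brA) (hLB : IsCocycle brH δH)
    (hR2 : TensorProduct.map δH LinearMap.id R
        = TensorProduct.map LinearMap.id (TensorProduct.lift brA)
            (TensorProduct.tensorTensorTensorComm k H A H A (R ⊗ₜ[k] R))) :
    SatisfiesBB4 δH (copairPhi brA R) (copairPsi brH R) := by
  intro h
  have hsplit := map_cobracket_bracket_id hLB h R
  simp only [map_comp_id_apply, hR2] at hsplit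
  rw [copairPsi_apply, hsplit]
  linear_combination (norm := abel) copair_bb4_pair hA h R R

end MatchedPair

section DoubleCross

variable {brA : A →ₗ[k] A →ₗ[k] A} {δA : A →ₗ[k] A ⊗[k] A}
  {brH : H →ₗ[k] H →ₗ[k] H} {δH : H →ₗ[k] H ⊗[k] H}
  {φ : A →ₗ[k] H ⊗[k] A} {ψ : H →ₗ[k] H ⊗[k] A}

local notation "ιA" => LinearMap.inl k A H
local notation "ιH" => LinearMap.inr k A H
local notation "brD" => bbBracket brA brH 0 0 0 0
local notation "δD" => bbCobracket δA δH φ ψ 0 0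

lemma bbBracket_zero_apply (x y : A × H) : brD x y = (brA x.1 y.1, brH x.2 y.2) := by
  simp [bbBracket]

lemma isLieAlg_bbBracket (hA : IsLieAlg brA) (hH : IsLieAlg brH) : IsLieAlg brD := by
  constructor
  · intro x y
    rw [bbBracket_zero_apply, bbBracket_zero_apply, hA.1, hH.1, Prod.neg_mk]
  · intro x y z
    simp only [bbBracket_zero_apply, Prod.mk_add_mk]
    exact Prod.mk_eq_zero.mpr ⟨hA.2 x.1 y.1 z.1, hH.2 x.2 y.2 z.2⟩

lemma bbCobracket_zero_apply (x : A × H) :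
    δD x = TensorProduct.map ιA ιA (δA x.1)
      + TensorProduct.map ιH ιA (φ x.1)
      - TensorProduct.map ιA ιH (TensorProduct.comm k H A (φ x.1))
      + (TensorProduct.map ιH ιH (δH x.2)
      + TensorProduct.map ιH ιA (ψ x.2)
      - TensorProduct.map ιA ιH (TensorProduct.comm k H A (ψ x.2))) := by
  simp [bbCobracket]

lemma bbCobracket_inl (a : A) :
    δD (ιA a) = TensorProduct.map ιA ιA (δA a)
      + TensorProduct.map ιH ιA (φ a)
      - TensorProduct.map ιA ιH (TensorProduct.comm k H A (φ a)) := by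
  simp [bbCobracket_zero_apply]

lemma bbCobracket_inr (h : H) :
    δD (ιH h) = TensorProduct.map ιH ιH (δH h)
      + TensorProduct.map ιH ιA (ψ h)
      - TensorProduct.map ιA ιH (TensorProduct.comm k H A (ψ h)) := by
  simp [bbCobracket_zero_apply]

lemma comm_bbCobracket (hA : ∀ x, TensorProduct.comm k A A (δA x) = - δA x)
    (hH : ∀ x, TensorProduct.comm k H H (δH x) = - δH x) (x : A × H) :
    TensorProduct.comm k (A × H) (A × H) (δD x) = - δD x := by
  rw [bbCobracket_zero_apply]
  simp only [map_add, map_sub, map_neg, ← TensorProduct.map_comm, hA, hH,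
    TensorProduct.comm_comm]
  abel

lemma map_bbCobracket_id_map_inl {Y : Type*} [AddCommGroup Y] [Module k Y]
    (e : Y →ₗ[k] A × H) (w : A ⊗[k] Y) :
    TensorProduct.map δD LinearMap.id (TensorProduct.map ιA e w)
      = TensorProduct.map (TensorProduct.map ιA ιA) e (TensorProduct.map δA LinearMap.id w)
      + TensorProduct.map (TensorProduct.map ιH ιA) e (TensorProduct.map φ LinearMap.id w)
      - TensorProduct.map (TensorProduct.map ιA ιH) e
          (TensorProduct.map ((TensorProduct.comm k H A).toLinearMap ∘ₗ φ) LinearMap.id w) := by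
  induction w using TensorProduct.induction_on with
  | zero => simp
  | add u v hu hv => simp only [map_add, hu, hv]; abel
  | tmul a y =>
    simp only [TensorProduct.map_tmul, LinearMap.id_coe, id_eq, LinearMap.coe_comp,
      Function.comp_apply, bbCobracket_inl, TensorProduct.sub_tmul, TensorProduct.add_tmul]
    rfl

lemma map_bbCobracket_id_map_inr {Y : Type*} [AddCommGroup Y] [Module k Y]
    (e : Y →ₗ[k] A × H) (w : H ⊗[k] Y) :
    TensorProduct.map δD LinearMap.id (TensorProduct.map ιH e w)
      = TensorProduct.map (TensorProduct.map ιH ιH) e (TensorProduct.map δH LinearMap.id w)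
      + TensorProduct.map (TensorProduct.map ιH ιA) e (TensorProduct.map ψ LinearMap.id w)
      - TensorProduct.map (TensorProduct.map ιA ιH) e
          (TensorProduct.map ((TensorProduct.comm k H A).toLinearMap ∘ₗ ψ) LinearMap.id w) := by
  induction w using TensorProduct.induction_on with
  | zero => simp
  | add u v hu hv => simp only [map_add, hu, hv]; abel
  | tmul h y =>
    simp only [TensorProduct.map_tmul, LinearMap.id_coe, id_eq, LinearMap.coe_comp,
      Function.comp_apply, bbCobracket_inr, TensorProduct.sub_tmul, TensorProduct.add_tmul]
    rfl

lemma coJacobi_inl_HAA (hA : ∀ x, TensorProduct.comm k A A (δA x) = - δA x)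
    (hBB3 : SatisfiesBB3 δA φ ψ) (a : A) :
    TensorProduct.map φ LinearMap.id (δA a)
      + TensorProduct.map ψ LinearMap.id (φ a)
      - rotate3 k A H A (TensorProduct.map ((TensorProduct.comm k H A).toLinearMap ∘ₗ φ)
          LinearMap.id (δA a))
      - rotate3 k A H A (TensorProduct.map ((TensorProduct.comm k H A).toLinearMap ∘ₗ ψ)
          LinearMap.id (φ a))
      - rotate3 k A H A (rotate3 k A A H (TensorProduct.map δA LinearMap.id
          (TensorProduct.comm k H A (φ a)))) = 0 := by
  have hφδ := rotate3_map_comm_comp_comm φ (δA a)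
  rw [hA a, map_neg, map_neg] at hφδ
  linear_combination (norm := abel) hφδ - rotate3_map_comm_comp ψ (φ a)
    - rotate3_rotate3_map_comm δA (φ a) - hBB3 a

lemma coJacobi_inl_HHA (hφ : IsLeftComodule δH φ) (a : A) :
    TensorProduct.map δH LinearMap.id (φ a)
      + rotate3 k A H H (TensorProduct.map ((TensorProduct.comm k H A).toLinearMap ∘ₗ φ)
          LinearMap.id (TensorProduct.comm k H A (φ a)))
      - rotate3 k A H H (rotate3 k H A H (TensorProduct.map φ LinearMap.id
          (TensorProduct.comm k H A (φ a)))) = 0 := by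
  linear_combination (norm := abel) hφ a + rotate3_map_comm_comp_comm φ (φ a)
    - rotate3_rotate3_map_comm φ (φ a)

lemma coJacobi_inr_HAA (hψ : IsRightComodule δA ψ) (h : H) :
    TensorProduct.map ψ LinearMap.id (ψ h)
      - rotate3 k A H A (TensorProduct.map ((TensorProduct.comm k H A).toLinearMap ∘ₗ ψ)
          LinearMap.id (ψ h))
      - rotate3 k A H A (rotate3 k A A H (TensorProduct.map δA LinearMap.id
          (TensorProduct.comm k H A (ψ h)))) = 0 := by
  have hψ' := congrArg (TensorProduct.assoc k H A A).symm (hψ h)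
  rw [map_sub, LinearEquiv.symm_apply_apply, ← swapR_apply] at hψ'
  linear_combination (norm := abel) - rotate3_map_comm_comp ψ (ψ h)
    - rotate3_rotate3_map_comm δA (ψ h) - hψ'

lemma coJacobi_inr_HHA (hH : ∀ x, TensorProduct.comm k H H (δH x) = - δH x)
    (hBB4 : SatisfiesBB4 δH φ ψ) (h : H) :
    TensorProduct.map δH LinearMap.id (ψ h)
      - rotate3 k A H H (TensorProduct.map ((TensorProduct.comm k H A).toLinearMap ∘ₗ ψ)
          LinearMap.id (δH h))
      + rotate3 k A H H (TensorProduct.map ((TensorProduct.comm k H A).toLinearMap ∘ₗ φ)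
          LinearMap.id (TensorProduct.comm k H A (ψ h)))
      + rotate3 k A H H (rotate3 k H A H (TensorProduct.map ψ LinearMap.id (δH h)))
      - rotate3 k A H H (rotate3 k H A H (TensorProduct.map φ LinearMap.id
          (TensorProduct.comm k H A (ψ h)))) = 0 := by
  have hψδ := rotate3_rotate3_map_comm ψ (TensorProduct.comm k H H (δH h))
  rw [TensorProduct.comm_comm, hH h] at hψδ
  simp only [map_neg] at hψδ
  linear_combination (norm := abel) hBB4 h - rotate3_map_comm_comp ψ (δH h)
    + rotate3_map_comm_comp_comm φ (ψ h) + hψδ - rotate3_rotate3_map_comm φ (ψ h)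

/- Instance search misses this: the `Add` of the outer tensor product is built from the
`AddCommMonoid` of `(A × H) ⊗ (A × H)`, which agrees with the one coming from its `AddCommGroup`
only after unfolding beyond instance transparency. -/
theorem isRightCancelAdd_tensor_three :
    IsRightCancelAdd (((A × H) ⊗[k] (A × H)) ⊗[k] (A × H)) :=
  AddRightCancelSemigroup.toIsRightCancelAdd (G := ((A × H) ⊗[k] (A × H)) ⊗[k] (A × H))

attribute [local instance] isRightCancelAdd_tensor_three

lemma coJacobi_bbCobracket_inl (hA : IsLieCoalg δA) (hφ : IsLeftComodule δH φ)
    (hBB3 : SatisfiesBB3 δA φ ψ) (a : A) :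
    TensorProduct.map δD LinearMap.id (δD (ιA a))
      + ξmap k (A × H) (TensorProduct.map δD LinearMap.id (δD (ιA a)))
      + ξmap k (A × H) (ξmap k (A × H) (TensorProduct.map δD LinearMap.id (δD (ιA a)))) = 0 := by
  have hAAA := hA.2 a
  have hHAA := coJacobi_inl_HAA hA.1 hBB3 a
  have hHHA := coJacobi_inl_HHA hφ a
  rw [ξmap_eq_rotate3] at hAAA
  have hAAH := congrArg (rotate3 k H A A) hHAA
  have hAHA := congrArg (rotate3 k A A H) hAAH
  have hHAH := congrArg (rotate3 k H H A) hHHA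
  have hAHH := congrArg (rotate3 k H A H) hHAH
  simp only [map_add, map_sub, map_zero, rotate3_rotate3_rotate3] at hAAH hAHA hHAH hAHH
  have E1 := congrArg (TensorProduct.map (TensorProduct.map ιA ιA) ιA) hAAA
  have E2 := congrArg (TensorProduct.map (TensorProduct.map ιH ιA) ιA) hHAA
  have E3 := congrArg (TensorProduct.map (TensorProduct.map ιA ιA) ιH) hAAH
  have E4 := congrArg (TensorProduct.map (TensorProduct.map ιA ιH) ιA) hAHA
  have E5 := congrArg (TensorProduct.map (TensorProduct.map ιH ιH) ιA) hHHA
  have E6 := congrArg (TensorProduct.map (TensorProduct.map ιH ιA) ιH) hHAH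
  have E7 := congrArg (TensorProduct.map (TensorProduct.map ιA ιH) ιH) hAHH
  simp only [map_add, map_sub, map_zero] at E1 E2 E3 E4 E5 E6 E7
  rw [bbCobracket_inl a]
  simp only [map_add, map_sub, map_bbCobracket_id_map_inl, map_bbCobracket_id_map_inr,
    ξmap_map_map]
  linear_combination (norm := abel) E1 + E2 + E3 + E4 + E5 + E6 + E7

lemma coJacobi_bbCobracket_inr (hH : IsLieCoalg δH) (hψ : IsRightComodule δA ψ)
    (hBB4 : SatisfiesBB4 δH φ ψ) (h : H) :
    TensorProduct.map δD LinearMap.id (δD (ιH h))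
      + ξmap k (A × H) (TensorProduct.map δD LinearMap.id (δD (ιH h)))
      + ξmap k (A × H) (ξmap k (A × H) (TensorProduct.map δD LinearMap.id (δD (ιH h)))) = 0 := by
  have hHHH := hH.2 h
  have hHAA := coJacobi_inr_HAA hψ h
  have hHHA := coJacobi_inr_HHA hH.1 hBB4 h
  rw [ξmap_eq_rotate3] at hHHH
  have hAAH := congrArg (rotate3 k H A A) hHAA
  have hAHA := congrArg (rotate3 k A A H) hAAH
  have hHAH := congrArg (rotate3 k H H A) hHHA
  have hAHH := congrArg (rotate3 k H A H) hHAH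
  simp only [map_add, map_sub, map_zero, rotate3_rotate3_rotate3] at hAAH hAHA hHAH hAHH
  have E1 := congrArg (TensorProduct.map (TensorProduct.map ιH ιH) ιH) hHHH
  have E2 := congrArg (TensorProduct.map (TensorProduct.map ιH ιA) ιA) hHAA
  have E3 := congrArg (TensorProduct.map (TensorProduct.map ιA ιA) ιH) hAAH
  have E4 := congrArg (TensorProduct.map (TensorProduct.map ιA ιH) ιA) hAHA
  have E5 := congrArg (TensorProduct.map (TensorProduct.map ιH ιH) ιA) hHHA
  have E6 := congrArg (TensorProduct.map (TensorProduct.map ιH ιA) ιH) hHAH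
  have E7 := congrArg (TensorProduct.map (TensorProduct.map ιA ιH) ιH) hAHH
  simp only [map_add, map_sub, map_zero] at E1 E2 E3 E4 E5 E6 E7
  rw [bbCobracket_inr h]
  simp only [map_add, map_sub, map_bbCobracket_id_map_inl, map_bbCobracket_id_map_inr,
    ξmap_map_map]
  linear_combination (norm := abel) E1 + E2 + E3 + E4 + E5 + E6 + E7

lemma isLieCoalg_bbCobracket (hA : IsLieCoalg δA) (hH : IsLieCoalg δH)
    (hφ : IsLeftComodule δH φ) (hψ : IsRightComodule δA ψ)
    (hBB3 : SatisfiesBB3 δA φ ψ) (hBB4 : SatisfiesBB4 δH φ ψ) : IsLieCoalg δD := by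
  refine ⟨comm_bbCobracket hA.1 hH.1, fun x => ?_⟩
  have hx : x = ιA x.1 + ιH x.2 := by ext <;> simp
  rw [hx]
  simp only [map_add]
  linear_combination (norm := abel) coJacobi_bbCobracket_inl hA hφ hBB3 x.1
    + coJacobi_bbCobracket_inr hH hψ hBB4 x.2

lemma isCocycle_bbCobracket (hA : IsLieAlg brA) (hH : IsLieAlg brH)
    (hδA : IsCocycle brA δA) (hδH : IsCocycle brH δH)
    (hφ : IsLeftComoduleLieAlg brA φ) (hψ : IsRightComoduleLieAlg brH ψ)
    (hAA2 : SatisfiesAA2 brA brH φ ψ) : IsCocycle brD δD := by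
  rintro ⟨a, g⟩ ⟨b, h⟩
  have hιA : brD (a, g) ∘ₗ ιA = ιA ∘ₗ brA a :=
    LinearMap.ext fun _ => by simp [bbBracket_zero_apply]
  have hιH : brD (a, g) ∘ₗ ιH = ιH ∘ₗ brH g :=
    LinearMap.ext fun _ => by simp [bbBracket_zero_apply]
  have hιA' : LinearMap.flip brD (b, h) ∘ₗ ιA = ιA ∘ₗ brA.flip b :=
    LinearMap.ext fun _ => by simp [bbBracket_zero_apply]
  have hιH' : LinearMap.flip brD (b, h) ∘ₗ ιH = ιH ∘ₗ brH.flip h :=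
    LinearMap.ext fun _ => by simp [bbBracket_zero_apply]
  have hgb := hAA2 g b
  have hha := hAA2.flip hA hH h a
  have hgb' := congrArg (TensorProduct.comm k H A) hgb
  have hha' := congrArg (TensorProduct.comm k H A) hha
  simp only [map_add, map_zero, ← TensorProduct.map_comm] at hgb' hha'
  have E1 := congrArg (TensorProduct.map ιH ιA) hgb
  have E2 := congrArg (TensorProduct.map ιH ιA) hha
  have E3 := congrArg (TensorProduct.map ιA ιH) hgb'
  have E4 := congrArg (TensorProduct.map ιA ιH) hha'
  simp only [map_add, map_zero] at E1 E2 E3 E4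
  rw [bbBracket_zero_apply]
  simp only [bbCobracket_zero_apply]
  rw [hδA a b, hδH g h, hφ a b, hψ g h]
  simp only [map_add, map_sub, ← TensorProduct.map_comm,
    map_map_id_of_comp_eq hιA, map_map_id_of_comp_eq hιH,
    map_map_id_of_comp_eq hιA', map_map_id_of_comp_eq hιH',
    map_id_map_of_comp_eq hιA, map_id_map_of_comp_eq hιH,
    map_id_map_of_comp_eq hιA', map_id_map_of_comp_eq hιH']
  linear_combination (norm := abel) - E1 - E2 + E3 + E4

theorem isLieBialg_bbCobracket (hA : IsLieBialg brA δA) (hH : IsLieBialg brH δH)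
    (hφ : IsLeftComodule δH φ) (hψ : IsRightComodule δA ψ)
    (hBB3 : SatisfiesBB3 δA φ ψ) (hBB4 : SatisfiesBB4 δH φ ψ)
    (hφLie : IsLeftComoduleLieAlg brA φ) (hψLie : IsRightComoduleLieAlg brH ψ)
    (hAA2 : SatisfiesAA2 brA brH φ ψ) :
    IsLieBialg brD δD :=
  ⟨isLieAlg_bbBracket hA.1 hH.1, isLieCoalg_bbCobracket hA.2.1 hH.2.1 hφ hψ hBB3 hBB4,
    isCocycle_bbCobracket hA.1 hH.1 hA.2.2 hH.2.2 hφLie hψLie hAA2⟩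

end DoubleCross

theorem skew_copairing_double_cross_coproduct_general
    (brA : A →ₗ[k] A →ₗ[k] A) (δA : A →ₗ[k] A ⊗[k] A)
    (brH : H →ₗ[k] H →ₗ[k] H) (δH : H →ₗ[k] H ⊗[k] H)
    (R : H ⊗[k] A)
    (hA : IsLieBialg brA δA) (hH : IsLieBialg brH δH)
    -- `R` is a skew-copairing: `R¹ ⊗ δ_A(R²) = [R¹, r¹] ⊗ r² ⊗ R²` in `H ⊗ A ⊗ A`
    (hR1 : TensorProduct.map LinearMap.id δA R
        = TensorProduct.map (TensorProduct.lift brH) (TensorProduct.comm k A A).toLinearMap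
            (TensorProduct.tensorTensorTensorComm k H A H A (R ⊗ₜ[k] R)))
    -- and `δ_H(R¹) ⊗ R² = R¹ ⊗ r¹ ⊗ [R², r²]` in `H ⊗ H ⊗ A`
    (hR2 : TensorProduct.map δH LinearMap.id R
        = TensorProduct.map LinearMap.id (TensorProduct.lift brA)
            (TensorProduct.tensorTensorTensorComm k H A H A (R ⊗ₜ[k] R))) :
    let φ := copairPhi brA R
    let ψ := copairPsi brH R
    -- `A` is a left `H`-comodule
    (∀ a, TensorProduct.map δH LinearMap.id (φ a)
        = (TensorProduct.assoc k H H A).symm (TensorProduct.map LinearMap.id φ (φ a))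
        - TensorProduct.map (TensorProduct.comm k H H).toLinearMap LinearMap.id
            ((TensorProduct.assoc k H H A).symm (TensorProduct.map LinearMap.id φ (φ a)))) ∧
    -- `H` is a right `A`-comodule
    (∀ h, TensorProduct.map LinearMap.id δA (ψ h)
        = TensorProduct.assoc k H A A (TensorProduct.map ψ LinearMap.id (ψ h))
        - TensorProduct.map LinearMap.id (TensorProduct.comm k A A).toLinearMap
            (TensorProduct.assoc k H A A (TensorProduct.map ψ LinearMap.id (ψ h)))) ∧
    -- (BB3)
    (∀ a, (TensorProduct.assoc k H A A).symm (TensorProduct.map LinearMap.id δA (φ a))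
        = TensorProduct.map φ LinearMap.id (δA a)
        + TensorProduct.map (TensorProduct.comm k A H).toLinearMap LinearMap.id
            ((TensorProduct.assoc k A H A).symm (TensorProduct.map LinearMap.id φ (δA a)))
        + TensorProduct.map ψ LinearMap.id (φ a)
        - swapR k H A A (TensorProduct.map ψ LinearMap.id (φ a))) ∧
    -- (BB4)
    (∀ h, TensorProduct.map δH LinearMap.id (ψ h)
        = (TensorProduct.assoc k H H A).symm (TensorProduct.map LinearMap.id ψ (δH h))
        + swapR k H A H (TensorProduct.map ψ LinearMap.id (δH h))
        + (TensorProduct.assoc k H H A).symm (TensorProduct.map LinearMap.id φ (ψ h))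
        - TensorProduct.map (TensorProduct.comm k H H).toLinearMap LinearMap.id
            ((TensorProduct.assoc k H H A).symm (TensorProduct.map LinearMap.id φ (ψ h)))) ∧
    -- `A` is a left `H`-comodule Lie algebra
    (∀ a b, φ (brA a b)
        = TensorProduct.map LinearMap.id (brA.flip b) (φ a)
        + TensorProduct.map LinearMap.id (brA a) (φ b)) ∧
    -- `H` is a right `A`-comodule Lie algebra
    (∀ h g, ψ (brH h g)
        = TensorProduct.map (brH h) LinearMap.id (ψ g)
        + TensorProduct.map (brH.flip g) LinearMap.id (ψ h)) ∧
    -- (AA2)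
    (∀ h a, TensorProduct.map (brH h) LinearMap.id (φ a)
        + TensorProduct.map LinearMap.id (brA.flip a) (ψ h) = 0) ∧
    -- `A ▶◀^R H` is a Lie bialgebra
    IsLieBialg (bbBracket brA brH 0 0 0 0) (bbCobracket δA δH φ ψ 0 0) := by
  intro φ ψ
  have hφ : IsLeftComodule δH φ := isLeftComodule_copairPhi hA.1 hR2
  have hψ : IsRightComodule δA ψ := isRightComodule_copairPsi hH.1 hR1
  have hBB3 : SatisfiesBB3 δA φ ψ := satisfiesBB3_copair hH.1 hA.2.2 hR1
  have hBB4 : SatisfiesBB4 δH φ ψ := satisfiesBB4_copair hA.1 hH.2.2 hR2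
  have hφLie : IsLeftComoduleLieAlg brA φ := isLeftComoduleLieAlg_copairPhi hA.1 R
  have hψLie : IsRightComoduleLieAlg brH ψ := isRightComoduleLieAlg_copairPsi hH.1 R
  have hAA2 : SatisfiesAA2 brA brH φ ψ := satisfiesAA2_copair hA.1 R
  exact ⟨hφ, hψ, hBB3, hBB4, hφLie, hψLie, hAA2,
    isLieBialg_bbCobracket hA hH hφ hψ hBB3 hBB4 hφLie hψLie hAA2⟩

/-- For a skew-copairing `R = R¹ ⊗ R² ∈ H ⊗ A` between Lie bialgebras, the
coactions `φ(a) = R¹ ⊗ [a, R²]` and `ψ(h) = [h, R¹] ⊗ R²` form a matched pair of Lie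
coalgebras, `A` is a left `H`-comodule Lie algebra, `H` is a right `A`-comodule Lie algebra,
(AA2) holds, and consequently `A ▶◀^R H` is a Lie bialgebra. -/
theorem skew_copairing_double_cross_coproduct [CharZero k]
    (brA : A →ₗ[k] A →ₗ[k] A) (δA : A →ₗ[k] A ⊗[k] A)
    (brH : H →ₗ[k] H →ₗ[k] H) (δH : H →ₗ[k] H ⊗[k] H)
    (R : H ⊗[k] A)
    (hA : IsLieBialg brA δA) (hH : IsLieBialg brH δH)
    -- `R` is a skew-copairing: `R¹ ⊗ δ_A(R²) = [R¹, r¹] ⊗ r² ⊗ R²` in `H ⊗ A ⊗ A`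
    (hR1 : TensorProduct.map LinearMap.id δA R
        = TensorProduct.map (TensorProduct.lift brH) (TensorProduct.comm k A A).toLinearMap
            (TensorProduct.tensorTensorTensorComm k H A H A (R ⊗ₜ[k] R)))
    -- and `δ_H(R¹) ⊗ R² = R¹ ⊗ r¹ ⊗ [R², r²]` in `H ⊗ H ⊗ A`
    (hR2 : TensorProduct.map δH LinearMap.id R
        = TensorProduct.map LinearMap.id (TensorProduct.lift brA)
            (TensorProduct.tensorTensorTensorComm k H A H A (R ⊗ₜ[k] R))) :
    let φ := copairPhi brA R
    let ψ := copairPsi brH R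
    -- `A` is a left `H`-comodule
    (∀ a, TensorProduct.map δH LinearMap.id (φ a)
        = (TensorProduct.assoc k H H A).symm (TensorProduct.map LinearMap.id φ (φ a))
        - TensorProduct.map (TensorProduct.comm k H H).toLinearMap LinearMap.id
            ((TensorProduct.assoc k H H A).symm (TensorProduct.map LinearMap.id φ (φ a)))) ∧
    -- `H` is a right `A`-comodule
    (∀ h, TensorProduct.map LinearMap.id δA (ψ h)
        = TensorProduct.assoc k H A A (TensorProduct.map ψ LinearMap.id (ψ h))
        - TensorProduct.map LinearMap.id (TensorProduct.comm k A A).toLinearMap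
            (TensorProduct.assoc k H A A (TensorProduct.map ψ LinearMap.id (ψ h)))) ∧
    -- (BB3)
    (∀ a, (TensorProduct.assoc k H A A).symm (TensorProduct.map LinearMap.id δA (φ a))
        = TensorProduct.map φ LinearMap.id (δA a)
        + TensorProduct.map (TensorProduct.comm k A H).toLinearMap LinearMap.id
            ((TensorProduct.assoc k A H A).symm (TensorProduct.map LinearMap.id φ (δA a)))
        + TensorProduct.map ψ LinearMap.id (φ a)
        - swapR k H A A (TensorProduct.map ψ LinearMap.id (φ a))) ∧
    -- (BB4)
    (∀ h, TensorProduct.map δH LinearMap.id (ψ h)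
        = (TensorProduct.assoc k H H A).symm (TensorProduct.map LinearMap.id ψ (δH h))
        + swapR k H A H (TensorProduct.map ψ LinearMap.id (δH h))
        + (TensorProduct.assoc k H H A).symm (TensorProduct.map LinearMap.id φ (ψ h))
        - TensorProduct.map (TensorProduct.comm k H H).toLinearMap LinearMap.id
            ((TensorProduct.assoc k H H A).symm (TensorProduct.map LinearMap.id φ (ψ h)))) ∧
    -- `A` is a left `H`-comodule Lie algebra
    (∀ a b, φ (brA a b)
        = TensorProduct.map LinearMap.id (brA.flip b) (φ a)
        + TensorProduct.map LinearMap.id (brA a) (φ b)) ∧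
    -- `H` is a right `A`-comodule Lie algebra
    (∀ h g, ψ (brH h g)
        = TensorProduct.map (brH h) LinearMap.id (ψ g)
        + TensorProduct.map (brH.flip g) LinearMap.id (ψ h)) ∧
    -- (AA2)
    (∀ h a, TensorProduct.map (brH h) LinearMap.id (φ a)
        + TensorProduct.map LinearMap.id (brA.flip a) (ψ h) = 0) ∧
    -- `A ▶◀^R H` is a Lie bialgebra
    IsLieBialg (bbBracket brA brH 0 0 0 0) (bbCobracket δA δH φ ψ 0 0) :=
  skew_copairing_double_cross_coproduct_general brA δA brH δH R hA hH hR1 hR2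

end
end
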